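/- arXiv:1609.03766 — 4 statements merged into one kernel-verified Lean document; each statement's English description precedes it below -/
import Mathlib

section
/- Let d ≥ 1, let f : ℝ^d → ℝ^d be a C^1 diffeomorphism, and let K ⊆ ℝ^d be a compact set with f(K) = K whose Lebesgue measure is m(K) = 1. Then for every real δ > 0, Lebesgue-almost every x ∈ K belongs to the set Λ(δ,f) = {x : there exists a positive integer N such that |det Df^n(x)| < (1+δ)^n for all n ≥ N}. -/
open MeasureTheory Filter Topology

/-- For a `C¹` diffeomorphism `f` of `ℝ^d` with a compact invariant set `K` of Lebesgue
measure `1`, for every `δ > 0`, Lebesgue-almost every `x ∈ K` belongs to the set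
`Λ(δ,f)` of points `x` for which there is a positive integer `N` with
`|det Df^n(x)| < (1+δ)^n` for all `n ≥ N`. -/
theorem ae_mem_Lambda (d : ℕ) (hd : 1 ≤ d)
    (f g : EuclideanSpace ℝ (Fin d) → EuclideanSpace ℝ (Fin d))
    (hf : ContDiff ℝ 1 f) (hg : ContDiff ℝ 1 g)
    (hgf : Function.LeftInverse g f) (hfg : Function.RightInverse g f)
    (K : Set (EuclideanSpace ℝ (Fin d))) (hK : IsCompact K) (hfK : f '' K = K)
    (hvolK : volume K = 1)
    (δ : ℝ) (hδ : 0 < δ) :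
    ∀ᵐ x ∂(volume.restrict K),
      ∃ N : ℕ, 0 < N ∧ ∀ n : ℕ, N ≤ n → |(fderiv ℝ (f^[n]) x).det| < (1 + δ) ^ n := by
  have hfinj : Function.Injective f := hgf.injective
  have hKmeas : MeasurableSet K := hK.measurableSet
  -- iterates are C¹
  have hdiff : ∀ n : ℕ, ContDiff ℝ 1 (f^[n]) := by
    intro n
    induction n with
    | zero => simpa using contDiff_id
    | succ n ih => rw [Function.iterate_succ']; exact hf.comp ih
  -- iterates preserve K
  have himg : ∀ n : ℕ, f^[n] '' K = K := by
    intro n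
    induction n with
    | zero => simp
    | succ n ih => rw [Function.iterate_succ', Set.image_comp, ih, hfK]
  -- the key integral identity
  have hint : ∀ n : ℕ,
      (∫⁻ x in K, ENNReal.ofReal |(fderiv ℝ (f^[n]) x).det| ∂volume) = 1 := by
    intro n
    rw [lintegral_abs_det_fderiv_eq_addHaar_image volume hKmeas
      (fun x _ => ((hdiff n).differentiable one_ne_zero x).hasFDerivAt.hasFDerivWithinAt)
      ((hfinj.iterate n).injOn), himg n, hvolK]
  set μ : Measure (EuclideanSpace ℝ (Fin d)) := volume.restrict K with hμ
  set A : ℕ → Set (EuclideanSpace ℝ (Fin d)) :=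
    fun n => {x | (1 + δ) ^ n ≤ |(fderiv ℝ (f^[n]) x).det|} with hA
  have h1δ : (0:ℝ) < 1 + δ := by linarith
  -- Markov inequality
  have hmeas : ∀ n : ℕ, AEMeasurable
      (fun x => ENNReal.ofReal |(fderiv ℝ (f^[n]) x).det|) μ := by
    intro n
    exact (ENNReal.measurable_ofReal.comp
      ((continuous_abs.comp (ContinuousLinearMap.continuous_det.comp
        ((hdiff n).continuous_fderiv one_ne_zero))).measurable)).aemeasurable
  have hAle : ∀ n : ℕ, μ (A n) ≤ ((ENNReal.ofReal (1 + δ))⁻¹) ^ n := by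
    intro n
    have hmk := mul_meas_ge_le_lintegral₀ (hmeas n) (ENNReal.ofReal ((1 + δ) ^ n))
    have hseteq : {x | ENNReal.ofReal ((1 + δ) ^ n) ≤
        ENNReal.ofReal |(fderiv ℝ (f^[n]) x).det|} = A n := by
      ext x
      simp only [Set.mem_setOf_eq, hA]
      rw [ENNReal.ofReal_le_ofReal_iff (abs_nonneg _)]
    rw [hseteq] at hmk
    have hint' : (∫⁻ x, ENNReal.ofReal |(fderiv ℝ (f^[n]) x).det| ∂μ) = 1 := hint n
    rw [hint'] at hmk
    have : μ (A n) ≤ (ENNReal.ofReal ((1 + δ) ^ n))⁻¹ := by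
      rw [ENNReal.le_inv_iff_mul_le, mul_comm]; exact hmk
    calc μ (A n) ≤ (ENNReal.ofReal ((1 + δ) ^ n))⁻¹ := this
      _ = ((ENNReal.ofReal (1 + δ))⁻¹) ^ n := by
          rw [ENNReal.ofReal_pow h1δ.le, ← ENNReal.inv_pow]
  -- Borel–Cantelli
  have hr : (ENNReal.ofReal (1 + δ))⁻¹ < 1 := by
    rw [ENNReal.inv_lt_one]
    exact_mod_cast (ENNReal.one_lt_ofReal).2 (by linarith)
  have hsum : (∑' n, μ (A n)) ≠ ⊤ := by
    refine ne_top_of_le_ne_top ?_ (ENNReal.tsum_le_tsum hAle)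
    rw [ENNReal.tsum_geometric]
    exact ENNReal.inv_ne_top.2 (tsub_pos_iff_lt.2 hr).ne'
  have hBC : μ (limsup A atTop) = 0 := measure_limsup_atTop_eq_zero hsum
  have : ∀ᵐ x ∂μ, x ∉ limsup A atTop := by
    rw [ae_iff]; simpa using hBC
  filter_upwards [this] with x hx
  rw [mem_limsup_iff_frequently_mem, not_frequently] at hx
  rw [eventually_atTop] at hx
  obtain ⟨N, hN⟩ := hx
  refine ⟨N + 1, Nat.succ_pos N, fun n hn => ?_⟩
  have := hN n (le_trans (Nat.le_succ N) hn)
  simpa only [hA, Set.mem_setOf_eq, not_le] using this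
end

section
/- Let d ≥ 1, let f : ℝ^d → ℝ^d be a C^1 diffeomorphism, and let K ⊆ ℝ^d be a compact set with f(K) = K whose Lebesgue measure is m(K) = 1. Then Lebesgue-almost every x ∈ K has the following property: every asymptotic measure μ of x (i.e., every weak-star limit point μ of the sequence of empirical measures μ_k(x)) satisfies ∫ log|det Df| dμ ≤ 0. -/
/-!
Write `J = log |det Df|`. By the chain rule `|det D(fⁿ)| = exp (Sₙ J)`, where `Sₙ J` is the
Birkhoff sum of `J`, and by the change of variables formula the integral of `|det D(fⁿ)|`
over `K` is at most `m(fⁿ K) ≤ m(K) < ∞`. Markov's inequality then gives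
`m {x ∈ K | Sₙ J x ≥ n ε} ≤ m(K) e^{-n ε}`, which is summable in `n`, so by Borel–Cantelli
almost every `x ∈ K` has `lim sup (1/n) Sₙ J x ≤ 0`. Along the subsequence defining an
asymptotic measure `μ` of such an `x`, these averages tend to `∫ J dμ`, which is therefore
`≤ 0`.
-/

open MeasureTheory Filter Topology

/-- The Birkhoff average `(1/k) ∑_{l=0}^{k-1} g(f^l(x))`, i.e. the integral of the
observable `g` against the `k`-th empirical measure `μ_k(x) = (1/k) ∑_{l<k} δ_{f^l(x)}`. -/
noncomputable def birkhoffAvg {X : Type*} (f : X → X) (g : X → ℝ) (x : X) (k : ℕ) : ℝ :=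
  (∑ l ∈ Finset.range k, g (f^[l] x)) / k

theorem birkhoffAvg_eq_birkhoffSum_div {X : Type*} (f : X → X) (g : X → ℝ) (x : X) (k : ℕ) :
    birkhoffAvg f g x k = birkhoffSum f g k x / k :=
  rfl

theorem ContinuousLinearMap.det_comp {R M : Type*} [CommRing R] [TopologicalSpace M]
    [AddCommGroup M] [Module R M] (A B : M →L[R] M) : (A.comp B).det = A.det * B.det :=
  LinearMap.det_comp _ _

section Jacobian

variable {𝕜 E : Type*} [NontriviallyNormedField 𝕜] [NormedAddCommGroup E] [NormedSpace 𝕜 E]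

theorem det_fderiv_ne_zero_of_leftInverse {f g : E → E} {x : E}
    (hf : DifferentiableAt 𝕜 f x) (hg : DifferentiableAt 𝕜 g (f x))
    (hgf : Function.LeftInverse g f) : (fderiv 𝕜 f x).det ≠ 0 := by
  have hchain : (fderiv 𝕜 g (f x)).comp (fderiv 𝕜 f x) = ContinuousLinearMap.id 𝕜 E := by
    rw [← fderiv_comp x hg hf, hgf.comp_eq_id, fderiv_id]
  have hdet : (fderiv 𝕜 g (f x)).det * (fderiv 𝕜 f x).det = 1 := by
    rw [← ContinuousLinearMap.det_comp, hchain]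
    exact LinearMap.det_id
  exact right_ne_zero_of_mul_eq_one hdet

theorem det_fderiv_iterate {f : E → E} (hf : Differentiable 𝕜 f) (n : ℕ) (x : E) :
    (fderiv 𝕜 f^[n] x).det = ∏ l ∈ Finset.range n, (fderiv 𝕜 f (f^[l] x)).det := by
  induction n with
  | zero =>
    rw [Function.iterate_zero, fderiv_id, Finset.prod_range_zero]
    exact LinearMap.det_id
  | succ n ih =>
    rw [Function.iterate_succ', fderiv_comp x (hf _) ((hf.iterate n) x),
      ContinuousLinearMap.det_comp, ih, Finset.prod_range_succ, mul_comm]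

end Jacobian

theorem abs_det_fderiv_iterate_eq_exp_birkhoffSum {E : Type*} [NormedAddCommGroup E]
    [NormedSpace ℝ E] {f : E → E} (hf : Differentiable ℝ f)
    (hdet : ∀ y, (fderiv ℝ f y).det ≠ 0) (n : ℕ) (x : E) :
    |(fderiv ℝ f^[n] x).det| =
      Real.exp (birkhoffSum f (fun y => Real.log |(fderiv ℝ f y).det|) n x) := by
  rw [det_fderiv_iterate hf, Finset.abs_prod, birkhoffSum, Real.exp_sum]
  exact Finset.prod_congr rfl fun l _ => (Real.exp_log (abs_pos.mpr (hdet _))).symm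

theorem lintegral_abs_det_fderiv_iterate_le {E : Type*} [NormedAddCommGroup E]
    [NormedSpace ℝ E] [FiniteDimensional ℝ E] [MeasurableSpace E] [BorelSpace E]
    (μ : Measure E) [μ.IsAddHaarMeasure] {f : E → E} {s : Set E} (hs : MeasurableSet s)
    (hf : Differentiable ℝ f) (hinj : Function.Injective f) (hfs : Set.MapsTo f s s) (n : ℕ) :
    ∫⁻ x in s, ENNReal.ofReal |(fderiv ℝ f^[n] x).det| ∂μ ≤ μ s :=
  calc ∫⁻ x in s, ENNReal.ofReal |(fderiv ℝ f^[n] x).det| ∂μ ≤ μ (f^[n] '' s) :=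
        lintegral_abs_det_fderiv_le_addHaar_image μ hs
          (fun x _ => ((hf.iterate n) x).hasFDerivAt.hasFDerivWithinAt)
          (hinj.iterate n).injOn
    _ ≤ μ s := measure_mono (hfs.iterate n).image_subset

section BirkhoffAverages

variable {X : Type*} [MeasurableSpace X] {μ : Measure X}

theorem measure_le_le_exp_neg_mul_lintegral_exp {u : X → ℝ} (hu : Measurable u) (t : ℝ) :
    μ {x | t ≤ u x} ≤
      ENNReal.ofReal (Real.exp (-t)) * ∫⁻ x, ENNReal.ofReal (Real.exp (u x)) ∂μ := by
  have hmarkov : ENNReal.ofReal (Real.exp t) *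
      μ {x | ENNReal.ofReal (Real.exp t) ≤ ENNReal.ofReal (Real.exp (u x))} ≤
        ∫⁻ x, ENNReal.ofReal (Real.exp (u x)) ∂μ :=
    mul_meas_ge_le_lintegral₀
      (ENNReal.measurable_ofReal.comp (Real.measurable_exp.comp hu)).aemeasurable _
  have hsub : {x | t ≤ u x} ⊆
      {x | ENNReal.ofReal (Real.exp t) ≤ ENNReal.ofReal (Real.exp (u x))} :=
    fun x hx => ENNReal.ofReal_le_ofReal (Real.exp_le_exp.mpr hx)
  have hcancel : ENNReal.ofReal (Real.exp (-t)) * ENNReal.ofReal (Real.exp t) = 1 := by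
    rw [← ENNReal.ofReal_mul (Real.exp_nonneg _), ← Real.exp_add, neg_add_cancel,
      Real.exp_zero, ENNReal.ofReal_one]
  calc μ {x | t ≤ u x}
      = ENNReal.ofReal (Real.exp (-t)) * (ENNReal.ofReal (Real.exp t) * μ {x | t ≤ u x}) := by
        rw [← mul_assoc, hcancel, one_mul]
    _ ≤ ENNReal.ofReal (Real.exp (-t)) * (ENNReal.ofReal (Real.exp t) *
          μ {x | ENNReal.ofReal (Real.exp t) ≤ ENNReal.ofReal (Real.exp (u x))}) := by
        gcongr
    _ ≤ _ := by gcongr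

variable {f : X → X} {φ : X → ℝ}

theorem measurable_birkhoffSum (hf : Measurable f) (hφ : Measurable φ) (n : ℕ) :
    Measurable (birkhoffSum f φ n) :=
  Finset.measurable_sum _ fun l _ => hφ.comp (hf.iterate l)

theorem ae_eventually_birkhoffSum_lt (hf : Measurable f) (hφ : Measurable φ) {C : ENNReal}
    (hC : C ≠ ⊤)
    (hmoment : ∀ n, ∫⁻ x, ENNReal.ofReal (Real.exp (birkhoffSum f φ n x)) ∂μ ≤ C)
    {ε : ℝ} (hε : 0 < ε) :
    ∀ᵐ x ∂μ, ∀ᶠ n in atTop, birkhoffSum f φ n x < n * ε := by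
  set r := ENNReal.ofReal (Real.exp (-ε))
  have hbound : ∀ n : ℕ, μ {x | n * ε ≤ birkhoffSum f φ n x} ≤ C * r ^ n := fun n =>
    calc μ {x | n * ε ≤ birkhoffSum f φ n x}
        ≤ ENNReal.ofReal (Real.exp (-(n * ε))) * C :=
          (measure_le_le_exp_neg_mul_lintegral_exp (measurable_birkhoffSum hf hφ n) _).trans
            (by gcongr; exact hmoment n)
      _ = C * r ^ n := by
          rw [mul_comm, ← ENNReal.ofReal_pow (Real.exp_nonneg _), ← Real.exp_nat_mul,
            neg_mul_eq_mul_neg]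
  have hr : r < 1 := by
    rw [ENNReal.ofReal_lt_one, Real.exp_lt_one_iff]
    exact neg_neg_of_pos hε
  have hsum : ∑' n, μ {x | n * ε ≤ birkhoffSum f φ n x} ≠ ⊤ := by
    refine ne_top_of_le_ne_top ?_ (ENNReal.tsum_le_tsum hbound)
    rw [ENNReal.tsum_mul_left, ENNReal.tsum_geometric]
    exact ENNReal.mul_ne_top hC (ENNReal.inv_ne_top.mpr (tsub_pos_of_lt hr).ne')
  filter_upwards [ae_eventually_notMem hsum] with x hx
  simpa only [Set.mem_ofPred_eq, not_le] using hx

theorem ae_eventually_birkhoffAvg_le (hf : Measurable f) (hφ : Measurable φ) {C : ENNReal}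
    (hC : C ≠ ⊤)
    (hmoment : ∀ n, ∫⁻ x, ENNReal.ofReal (Real.exp (birkhoffSum f φ n x)) ∂μ ≤ C) :
    ∀ᵐ x ∂μ, ∀ ε > 0, ∀ᶠ n in atTop, birkhoffAvg f φ x n ≤ ε := by
  have hall : ∀ᵐ x ∂μ, ∀ m : ℕ, ∀ᶠ n in atTop,
      birkhoffSum f φ n x < n * (1 / ((m : ℝ) + 1)) :=
    ae_all_iff.mpr fun m => ae_eventually_birkhoffSum_lt hf hφ hC hmoment (by positivity)
  filter_upwards [hall] with x hx ε hε
  obtain ⟨m, hm⟩ := exists_nat_one_div_lt hε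
  filter_upwards [hx m, eventually_gt_atTop 0] with n hn hn0
  rw [birkhoffAvg_eq_birkhoffSum_div, div_le_iff₀ (Nat.cast_pos.mpr hn0)]
  calc birkhoffSum f φ n x ≤ n * (1 / ((m : ℝ) + 1)) := hn.le
    _ ≤ ε * n := by rw [mul_comm]; gcongr

end BirkhoffAverages

theorem ae_asymptotic_measure_log_det_nonpos_general (d : ℕ)
    (f g : EuclideanSpace ℝ (Fin d) → EuclideanSpace ℝ (Fin d))
    (hf : ContDiff ℝ 1 f) (hg : ContDiff ℝ 1 g)
    (hgf : Function.LeftInverse g f)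
    (K : Set (EuclideanSpace ℝ (Fin d))) (hK : IsCompact K) (hfK : f '' K = K) :
    ∀ᵐ x ∂(volume.restrict K),
      ∀ μ : Measure (EuclideanSpace ℝ (Fin d)), IsProbabilityMeasure μ → μ Kᶜ = 0 →
        (∃ φ : ℕ → ℕ, StrictMono φ ∧
          ∀ h : EuclideanSpace ℝ (Fin d) → ℝ, Continuous h →
            Tendsto (fun i => birkhoffAvg f h x (φ i)) atTop (𝓝 (∫ y, h y ∂μ))) →
        (∫ y, Real.log |(fderiv ℝ f y).det| ∂μ) ≤ 0 := by
  have hfd : Differentiable ℝ f := hf.differentiable one_ne_zero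
  have hdet : ∀ y, (fderiv ℝ f y).det ≠ 0 := fun y =>
    det_fderiv_ne_zero_of_leftInverse (hfd y) (hg.differentiable one_ne_zero (f y)) hgf
  set J := fun y => Real.log |(fderiv ℝ f y).det|
  have hJ : Continuous J :=
    (ContinuousLinearMap.continuous_det.comp (hf.continuous_fderiv one_ne_zero)).abs.log
      fun y => abs_ne_zero.mpr (hdet y)
  have hmoment (n : ℕ) :
      ∫⁻ x in K, ENNReal.ofReal (Real.exp (birkhoffSum f J n x)) ≤ volume K := by
    simpa only [abs_det_fderiv_iterate_eq_exp_birkhoffSum hfd hdet] using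
      lintegral_abs_det_fderiv_iterate_le volume hK.measurableSet hfd hgf.injective
        (Set.mapsTo_iff_image_subset.mpr hfK.subset) n
  filter_upwards [ae_eventually_birkhoffAvg_le hf.continuous.measurable hJ.measurable
    hK.measure_lt_top.ne hmoment] with x hx
  rintro μ - - ⟨φ, hφ, hconv⟩
  refine le_of_forall_gt_imp_ge_of_dense fun ε hε => ?_
  exact le_of_tendsto (hconv J hJ) (hφ.tendsto_atTop.eventually (hx ε hε))

/-- Let `f` be a `C¹` diffeomorphism of `ℝ^d` with a compact invariant set `K` of Lebesgue
measure `1`. Then almost every `x ∈ K` satisfies: every asymptotic measure `μ` of `x`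
(every probability measure on `K` which is a weak-star limit point of the sequence of
empirical measures `μ_k(x)`, i.e. a weak-star limit of `μ_{k_i}(x)` along some strictly
increasing subsequence) satisfies `∫ log |det Df| dμ ≤ 0`. -/
theorem ae_asymptotic_measure_log_det_nonpos (d : ℕ) (hd : 1 ≤ d)
    (f g : EuclideanSpace ℝ (Fin d) → EuclideanSpace ℝ (Fin d))
    (hf : ContDiff ℝ 1 f) (hg : ContDiff ℝ 1 g)
    (hgf : Function.LeftInverse g f) (hfg : Function.RightInverse g f)
    (K : Set (EuclideanSpace ℝ (Fin d))) (hK : IsCompact K) (hfK : f '' K = K)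
    (hvolK : volume K = 1) :
    ∀ᵐ x ∂(volume.restrict K),
      ∀ μ : Measure (EuclideanSpace ℝ (Fin d)), IsProbabilityMeasure μ → μ Kᶜ = 0 →
        (∃ φ : ℕ → ℕ, StrictMono φ ∧
          ∀ h : EuclideanSpace ℝ (Fin d) → ℝ, Continuous h →
            Tendsto (fun i => birkhoffAvg f h x (φ i)) atTop (𝓝 (∫ y, h y ∂μ))) →
        (∫ y, Real.log |(fderiv ℝ f y).det| ∂μ) ≤ 0 :=
  ae_asymptotic_measure_log_det_nonpos_general d f g hf hg hgf K hK hfK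
end

section
/- Let X be a compact metric space, let f : X → X be a continuous map, and let μ be an f-invariant Borel probability measure on X. If the statistical basin B(μ) = {x ∈ X : the empirical measures μ_k(x) converge weak-star to μ} is dense in X, then the set {x ∈ X : μ is a weak-star limit point of the sequence (μ_k(x))_k} is a residual subset of X (it contains a dense G_δ set). -/
/-!
The empirical measures `μ_k(x)` depend continuously on `x`. Hence for a neighbourhood `V` of `μ`
and `N : ℕ`, the set of points `x` with `μ_k(x) ∈ V` for some `k ≥ N` is open, and it contains the
basin, so it is dense. Weak-star convergence of probability measures on a compact metric space is
metrizable, so intersecting these sets over `N` and over a countable neighbourhood basis of `μ`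
gives a dense `G_δ` set of points at which `μ` is a cluster point of `(μ_k(x))_k`, and a cluster
point of a sequence in a metrizable space is the limit of a subsequence.
-/

open MeasureTheory Filter Topology

open scoped ENNReal

theorem residual_mapClusterPt_of_dense_tendsto {X Y : Type*} [TopologicalSpace X]
    [TopologicalSpace Y] {u : ℕ → X → Y} (hu : ∀ k, Continuous (u k)) {y : Y}
    [(𝓝 y).IsCountablyGenerated] (hdense : Dense {x | Tendsto (u · x) atTop (𝓝 y)}) :
    {x | MapClusterPt y atTop (u · x)} ∈ residual X := by
  obtain ⟨V, hV, hVb⟩ := (nhds_basis_opens y).exists_antitone_subbasis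
  have hcluster : {x | MapClusterPt y atTop (u · x)} = ⋂ n, ⋂ N, ⋃ k ≥ N, u k ⁻¹' V n := by
    ext x
    simp [hVb.toHasBasis.mapClusterPt_iff_frequently, frequently_atTop]
  rw [hcluster]
  simp only [countable_iInter_mem]
  intro n N
  refine residual_of_dense_open (isOpen_biUnion fun k _ => (hV n).2.preimage (hu k))
    (hdense.mono fun x hx => ?_)
  obtain ⟨k, hkV, hk⟩ :=
    ((hx.eventually ((hV n).2.mem_nhds (hV n).1)).and (eventually_ge_atTop N)).exists
  exact Set.mem_biUnion hk hkV

theorem ProbabilityMeasure.tendsto_iff_forall_continuous_integral_tendsto {Ω γ : Type*}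
    [MeasurableSpace Ω] [TopologicalSpace Ω] [OpensMeasurableSpace Ω] [CompactSpace Ω]
    {F : Filter γ} {μs : γ → ProbabilityMeasure Ω} {μ : ProbabilityMeasure Ω} :
    Tendsto μs F (𝓝 μ) ↔ ∀ h : Ω → ℝ, Continuous h →
      Tendsto (fun i ↦ ∫ ω, h ω ∂(μs i : Measure Ω)) F (𝓝 (∫ ω, h ω ∂(μ : Measure Ω))) := by
  rw [ProbabilityMeasure.tendsto_iff_forall_integral_tendsto]
  exact ⟨fun H h hh => H (BoundedContinuousFunction.mkOfCompact ⟨h, hh⟩),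
    fun H g => H g g.continuous⟩

theorem continuous_birkhoffAvg {X : Type*} [TopologicalSpace X] {f : X → X} (hf : Continuous f)
    {g : X → ℝ} (hg : Continuous g) (k : ℕ) : Continuous (birkhoffAvg f g · k) :=
  (continuous_finsetSum _ fun l _ => hg.comp (hf.iterate l)).div_const _

section EmpiricalMeasure

variable {X : Type*} [MeasurableSpace X]

/-- This is `μ_{k+1}(x)`: starting at `k + 1` avoids the zero measure at `k = 0`. -/
noncomputable def empiricalMeasure (f : X → X) (x : X) (k : ℕ) : ProbabilityMeasure X :=
  ⟨((k + 1 : ℕ) : ℝ≥0∞)⁻¹ • ∑ l ∈ Finset.range (k + 1), Measure.dirac (f^[l] x), by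
    constructor
    simp [ENNReal.inv_mul_cancel]⟩

theorem integral_empiricalMeasure (f : X → X) (x : X) (k : ℕ) {g : X → ℝ} (hg : Measurable g) :
    ∫ y, g y ∂(empiricalMeasure f x k : Measure X) = birkhoffAvg f g x (k + 1) := by
  simp only [empiricalMeasure, ProbabilityMeasure.coe_mk]
  rw [integral_smul_measure, integral_finsetSum_measure
    fun l _ => integrable_dirac' hg.stronglyMeasurable (by simp), ENNReal.toReal_inv,
    ENNReal.toReal_natCast]
  simp [birkhoffAvg, integral_dirac' _ _ hg.stronglyMeasurable, div_eq_inv_mul]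

variable [TopologicalSpace X] [OpensMeasurableSpace X]

theorem continuous_empiricalMeasure {f : X → X} (hf : Continuous f) (k : ℕ) :
    Continuous (empiricalMeasure f · k) :=
  ProbabilityMeasure.continuous_iff_forall_continuous_integral.2 fun g => by
    simpa only [integral_empiricalMeasure _ _ _ g.continuous.measurable]
      using continuous_birkhoffAvg hf g.continuous (k + 1)

theorem tendsto_empiricalMeasure_iff [CompactSpace X] {γ : Type*} {F : Filter γ}
    {f : X → X} {x : X} {φ : γ → ℕ} {μ : ProbabilityMeasure X} :
    Tendsto (fun i ↦ empiricalMeasure f x (φ i)) F (𝓝 μ) ↔ ∀ h : X → ℝ, Continuous h →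
      Tendsto (fun i ↦ birkhoffAvg f h x (φ i + 1)) F (𝓝 (∫ y, h y ∂(μ : Measure X))) := by
  simp only [ProbabilityMeasure.tendsto_iff_forall_continuous_integral_tendsto]
  refine forall₂_congr fun h hh => ?_
  simp only [integral_empiricalMeasure _ _ _ hh.measurable]

end EmpiricalMeasure

theorem residual_limit_point_of_dense_basin_general {X : Type*} [MetricSpace X] [CompactSpace X]
    [MeasurableSpace X] [BorelSpace X]
    (f : X → X) (hf : Continuous f)
    (μ : Measure X) [IsProbabilityMeasure μ]
    (hdense : Dense {x : X | ∀ h : X → ℝ, Continuous h →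
      Tendsto (birkhoffAvg f h x) atTop (𝓝 (∫ y, h y ∂μ))}) :
    {x : X | ∃ φ : ℕ → ℕ, StrictMono φ ∧ ∀ h : X → ℝ, Continuous h →
      Tendsto (fun i => birkhoffAvg f h x (φ i)) atTop (𝓝 (∫ y, h y ∂μ))} ∈
        residual X := by
  let μ' : ProbabilityMeasure X := ⟨μ, ‹_›⟩
  have hbasin : Dense {x | Tendsto (empiricalMeasure f x ·) atTop (𝓝 μ')} := by
    refine hdense.mono fun x hx => tendsto_empiricalMeasure_iff (φ := id).2 fun h hh => ?_
    exact (tendsto_add_atTop_iff_nat 1).2 (hx h hh)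
  filter_upwards [residual_mapClusterPt_of_dense_tendsto (continuous_empiricalMeasure hf) hbasin]
    with x hx
  obtain ⟨φ, hφ, hlim⟩ := hx.tendsto_subseq
  exact ⟨(φ · + 1), hφ.add_const 1, tendsto_empiricalMeasure_iff.1 hlim⟩

/-- Let `X` be a compact metric space, `f : X → X` continuous and `μ` an `f`-invariant
Borel probability measure on `X`. If the statistical basin
`B(μ) = {x : μ_k(x) → μ weak-star}` is dense, then the set of points `x` for which `μ`
is a weak-star limit point of the sequence of empirical measures `(μ_k(x))_k`
(i.e. some subsequence converges to `μ` weak-star, meaning the Birkhoff averages of every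
continuous function `h` along that subsequence converge to `∫ h dμ`) is residual in `X`. -/
theorem residual_limit_point_of_dense_basin {X : Type*} [MetricSpace X] [CompactSpace X]
    [MeasurableSpace X] [BorelSpace X]
    (f : X → X) (hf : Continuous f)
    (μ : Measure X) [IsProbabilityMeasure μ] (hinv : μ.map f = μ)
    (hdense : Dense {x : X | ∀ h : X → ℝ, Continuous h →
      Tendsto (birkhoffAvg f h x) atTop (𝓝 (∫ y, h y ∂μ))}) :
    {x : X | ∃ φ : ℕ → ℕ, StrictMono φ ∧ ∀ h : X → ℝ, Continuous h →
      Tendsto (fun i => birkhoffAvg f h x (φ i)) atTop (𝓝 (∫ y, h y ∂μ))} ∈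
        residual X :=
  residual_limit_point_of_dense_basin_general f hf μ hdense
end

section
/- Let X be a compact metric space, let f : X → X be a continuous map, and let σ ∈ X be a fixed point of f. If the statistical basin B(δ_σ) = {x ∈ X : the empirical measures μ_k(x) converge weak-star to δ_σ} is dense in X, then there is a residual subset L ⊆ X such that every x ∈ L satisfies σ ∈ ω(x), where ω(x) is the ω-limit set of x under f. -/
open MeasureTheory Filter Topology

/-! A point `x` whose Birkhoff averages converge to `h σ` for every continuous `h` must have `σ`
in its `ω`-limit set: otherwise its orbit eventually leaves a neighbourhood of `σ`, and a bump
function at `σ` supported in that neighbourhood has Birkhoff averages tending to `0 ≠ 1`.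
Moreover, `{x | σ ∈ ω(x)} = ⋂ₖ ⋂_N ⋃_{m ≥ N} f^[-m](B(σ, 1/(k+1)))` is a `G_δ`, and a `G_δ`
containing a dense set is residual. -/

theorem tendsto_birkhoffAvg_zero_of_eventually_eq_zero {X : Type*} {f : X → X} {g : X → ℝ}
    {x : X} (hg : ∀ᶠ l in atTop, g (f^[l] x) = 0) :
    Tendsto (birkhoffAvg f g x) atTop (𝓝 0) := by
  obtain ⟨N, hN⟩ := eventually_atTop.mp hg
  refine (tendsto_const_div_atTop_nhds_zero_nat (∑ l ∈ Finset.range N, g (f^[l] x))).congr' ?_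
  filter_upwards [eventually_ge_atTop N] with k hk
  rw [birkhoffAvg, ← Finset.sum_range_add_sum_Ico _ hk,
    Finset.sum_eq_zero fun l hl => hN l (Finset.mem_Ico.mp hl).1, add_zero]

theorem mapClusterPt_of_tendsto_birkhoffAvg {X : Type*} [TopologicalSpace X]
    [CompletelyRegularSpace X] {f : X → X} {σ x : X}
    (hx : ∀ h : X → ℝ, Continuous h → Tendsto (birkhoffAvg f h x) atTop (𝓝 (h σ))) :
    MapClusterPt σ atTop (fun n => f^[n] x) := by
  rw [mapClusterPt_iff_frequently]
  intro s hs
  by_contra hleaves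
  rw [not_frequently] at hleaves
  obtain ⟨U, hUs, hU, hσU⟩ := mem_nhds_iff.mp hs
  obtain ⟨φ, hφ, hφσ, hφU⟩ := completelyRegularSpace_iff_isOpen.mp ‹_› σ U hU hσU
  set bump : X → ℝ := fun y => 1 - φ y
  have hvanish : ∀ᶠ l in atTop, bump (f^[l] x) = 0 := hleaves.mono fun l hl => by
    simp [bump, hφU fun hmem => hl (hUs hmem)]
  have hlim := tendsto_nhds_unique (hx bump (by fun_prop))
    (tendsto_birkhoffAvg_zero_of_eventually_eq_zero hvanish)
  simp [bump, hφσ] at hlim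

theorem isGδ_setOf_mapClusterPt {X Y : Type*} [TopologicalSpace X] [PseudoMetricSpace Y]
    {u : ℕ → X → Y} (hu : ∀ n, Continuous (u n)) (y : Y) :
    IsGδ {x | MapClusterPt y atTop (fun n => u n x)} := by
  have hset : {x | MapClusterPt y atTop (fun n => u n x)} =
      ⋂ (k : ℕ) (N : ℕ), ⋃ (m : ℕ) (_ : N ≤ m), u m ⁻¹' Metric.ball y (1 / (k + 1)) := by
    ext x
    simp [Metric.nhds_basis_ball_inv_nat_succ.mapClusterPt_iff_frequently, frequently_atTop]
  rw [hset]
  refine IsGδ.iInter fun k => IsGδ.iInter_of_isOpen fun N => ?_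
  exact isOpen_biUnion fun m _ => Metric.isOpen_ball.preimage (hu m)

theorem residual_omega_limit_of_dense_basin_general {X : Type*} [MetricSpace X]
    (f : X → X) (hf : Continuous f) (σ : X)
    (hdense : Dense {x : X | ∀ h : X → ℝ, Continuous h →
      Tendsto (birkhoffAvg f h x) atTop (𝓝 (h σ))}) :
    ∃ L ∈ residual X, ∀ x ∈ L, MapClusterPt σ atTop (fun n : ℕ => f^[n] x) := by
  refine ⟨{x | MapClusterPt σ atTop (fun n => f^[n] x)}, ?_, fun x hx => hx⟩
  have hbasin : Dense {x | MapClusterPt σ atTop (fun n => f^[n] x)} :=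
    hdense.mono fun x hx => mapClusterPt_of_tendsto_birkhoffAvg hx
  exact residual_of_dense_Gδ (isGδ_setOf_mapClusterPt hf.iterate σ) hbasin

/-- Let `X` be a compact metric space, `f : X → X` continuous and `σ` a fixed point of `f`.
If the statistical basin `B(δ_σ) = {x : μ_k(x) → δ_σ weak-star}` (i.e. the points `x`
such that the Birkhoff averages of every continuous function `h` converge to
`h σ = ∫ h dδ_σ`) is dense in `X`, then there is a residual set `L ⊆ X` such that every
`x ∈ L` satisfies `σ ∈ ω(x)`, i.e. `σ` is an accumulation point of the forward orbit
`(f^n(x))_{n ≥ 0}`. -/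
theorem residual_omega_limit_of_dense_basin {X : Type*} [MetricSpace X] [CompactSpace X]
    (f : X → X) (hf : Continuous f) (σ : X) (hσ : f σ = σ)
    (hdense : Dense {x : X | ∀ h : X → ℝ, Continuous h →
      Tendsto (birkhoffAvg f h x) atTop (𝓝 (h σ))}) :
    ∃ L ∈ residual X, ∀ x ∈ L, MapClusterPt σ atTop (fun n : ℕ => f^[n] x) :=
  residual_omega_limit_of_dense_basin_general f hf σ hdense
end
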